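/- arXiv:2008.03061 — 5 statements merged into one kernel-verified Lean document; each statement's English description precedes it below -/
import Mathlib

section
/- For every n ≥ 1 and every HC-tree (T, δ) of the complete graph K_n, DC-cost(K_n,(T,δ)) = (n³ − n)/3. -/
/-- A rooted binary tree whose leaves are labelled by vertices of type `V`.
Every internal node has exactly two children. -/
inductive HCTree (V : Type) where
  | leaf : V → HCTree V
  | node : HCTree V → HCTree V → HCTree V

namespace HCTree

/-- The list of leaf labels of an HC-tree, from left to right. -/
def leaves {V : Type} : HCTree V → List V
  | leaf v => [v]
  | node l r => leaves l ++ leaves r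

open Classical in
/-- The Dasgupta cost of an HC-tree on a graph `G`: the sum over all edges `uv` of `G`
of the number of leaves of the subtree rooted at the least common ancestor of `u` and `v`.
Equivalently (as computed here, recursively), at each internal node we add
(number of leaves below the node) times (number of edges split at that node). -/
noncomputable def dcCost {V : Type} (G : SimpleGraph V) : HCTree V → ℕ
  | leaf _ => 0
  | node l r =>
      dcCost G l + dcCost G r +
        (l.leaves.length + r.leaves.length) *
          (l.leaves.map (fun u => r.leaves.countP (fun v => decide (G.Adj u v)))).sum

end HCTree

open HCTree

/-- `T` together with the implicit leaf labelling is an HC-tree of a graph on vertex set `V`: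
the leaf labels are pairwise distinct and every vertex occurs as a leaf label,
i.e. the labelling is a bijection between `V` and the leaves of `T`. -/
def IsHCTree {V : Type} (T : HCTree V) : Prop :=
  T.leaves.Nodup ∧ ∀ v : V, v ∈ T.leaves

/-- `W` is the maximum DC-cost over all HC-trees of `G`. -/
def IsMaxCost {V : Type} (G : SimpleGraph V) (W : ℕ) : Prop :=
  (∃ T : HCTree V, IsHCTree T ∧ dcCost G T = W) ∧
  ∀ T : HCTree V, IsHCTree T → dcCost G T ≤ W

/-- `W` is the minimum DC-cost over all HC-trees of `G`. -/
def IsMinCost {V : Type} (G : SimpleGraph V) (W : ℕ) : Prop :=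
  (∃ T : HCTree V, IsHCTree T ∧ dcCost G T = W) ∧
  ∀ T : HCTree V, IsHCTree T → W ≤ dcCost G T

/-- The disjoint union `G^(k)` of `k` copies of `G`, on vertex set `V × Fin k`. -/
def copies {V : Type} (G : SimpleGraph V) (k : ℕ) : SimpleGraph (V × Fin k) where
  Adj a b := a.2 = b.2 ∧ G.Adj a.1 b.1
  symm := ⟨fun _ _ h => ⟨h.1.symm, h.2.symm⟩⟩
  loopless := ⟨fun a h => G.loopless.irrefl a.1 h.2⟩

/-! Splitting a node of `T` separates every left leaf from every right leaf, so the node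
contributes `(a + b) a b` to the cost of `K_n`, where `a, b` are the numbers of leaves on the two
sides. As `(a + b)³ - (a + b) = (a³ - a) + (b³ - b) + 3 (a + b) a b`, the quantity
`3 · cost + #leaves` is the cube of the number of leaves, independently of the shape of `T`. -/

namespace HCTree

variable {V : Type}

open Classical in
theorem sum_map_countP_adj_of_forall_adj {G : SimpleGraph V} {l r : List V}
    (h : ∀ u ∈ l, ∀ v ∈ r, G.Adj u v) :
    (l.map fun u => r.countP fun v => decide (G.Adj u v)).sum = l.length * r.length := by
  have hcount : ∀ u ∈ l, (r.countP fun v => decide (G.Adj u v)) = r.length :=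
    fun u hu => List.countP_eq_length.2 fun v hv => decide_eq_true (h u hu v hv)
  rw [List.map_congr_left hcount, List.map_const', List.sum_replicate, smul_eq_mul]

theorem three_mul_dcCost_top_add_length {T : HCTree V} (hT : T.leaves.Nodup) :
    3 * dcCost ⊤ T + T.leaves.length = T.leaves.length ^ 3 := by
  induction T with
  | leaf v => simp [dcCost, leaves]
  | node l r ihl ihr =>
    obtain ⟨hl, hr, hlr⟩ := List.nodup_append.1 hT
    have hcomplete : ∀ u ∈ l.leaves, ∀ v ∈ r.leaves, (⊤ : SimpleGraph V).Adj u v :=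
      fun u hu v hv => hlr u hu v hv
    rw [dcCost, leaves, List.length_append, sum_map_countP_adj_of_forall_adj hcomplete]
    linear_combination ihl hl + ihr hr

end HCTree

theorem IsHCTree.length_leaves {V : Type} [Fintype V] {T : HCTree V} (hT : IsHCTree T) :
    T.leaves.length = Fintype.card V := by
  classical
  have huniv : T.leaves.toFinset = Finset.univ :=
    Finset.eq_univ_iff_forall.2 fun v => List.mem_toFinset.2 (hT.2 v)
  rw [← List.toFinset_card_of_nodup hT.1, huniv, Finset.card_univ]

theorem dcCost_completeGraph_general (n : ℕ)
    (T : HCTree (Fin n)) (hT : IsHCTree T) :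
    dcCost (⊤ : SimpleGraph (Fin n)) T = (n ^ 3 - n) / 3 := by
  have h := three_mul_dcCost_top_add_length hT.1
  rw [hT.length_leaves, Fintype.card_fin] at h
  omega

/-- For every `n ≥ 1`, every HC-tree of the complete graph `K_n`
has DC-cost `(n³ − n)/3`. -/
theorem dcCost_completeGraph (n : ℕ) (hn : 1 ≤ n)
    (T : HCTree (Fin n)) (hT : IsHCTree T) :
    dcCost (⊤ : SimpleGraph (Fin n)) T = (n ^ 3 - n) / 3 :=
  dcCost_completeGraph_general n T hT
end

section
/- For every graph G on n vertices and every HC-tree (T, δ) of G, DC-cost(G,(T,δ)) + DC-cost(Ḡ,(T,δ)) = (n³ − n)/3, where Ḡ is the complement graph of G. -/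
open HCTree

namespace SimpleGraph

variable {V : Type}

theorem countP_adj_add_countP_compl_adj (G : SimpleGraph V) [DecidableRel G.Adj]
    [DecidableRel Gᶜ.Adj] {u : V} {R : List V} (hu : u ∉ R) :
    R.countP (fun v => decide (G.Adj u v)) + R.countP (fun v => decide (Gᶜ.Adj u v)) =
      R.length := by
  rw [List.length_eq_countP_add_countP (fun v => decide (G.Adj u v))]
  congr 1
  refine List.countP_congr fun v hv => ?_
  have huv : u ≠ v := fun h => hu (h ▸ hv)
  simp [huv]

theorem sum_countP_adj_add_sum_countP_compl_adj (G : SimpleGraph V) [DecidableRel G.Adj]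
    [DecidableRel Gᶜ.Adj] {L R : List V} (h : L.Disjoint R) :
    (L.map fun u => R.countP fun v => decide (G.Adj u v)).sum +
        (L.map fun u => R.countP fun v => decide (Gᶜ.Adj u v)).sum =
      L.length * R.length := by
  rw [← List.sum_map_add, List.map_congr_left fun u hu =>
    countP_adj_add_countP_compl_adj G fun huR => h hu huR]
  simp

end SimpleGraph

namespace HCTree

open Classical in
theorem three_mul_dcCost_add_dcCost_compl_add_length {V : Type} (G : SimpleGraph V)
    (T : HCTree V) (hT : T.leaves.Nodup) :
    3 * (dcCost G T + dcCost Gᶜ T) + T.leaves.length = T.leaves.length ^ 3 := by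
  induction T with
  | leaf _ => simp [dcCost, leaves]
  | node l r ihl ihr =>
    obtain ⟨hl, hr, hlr⟩ := List.nodup_append'.mp hT
    -- `dcCost` decides adjacency in `Gᶜ` classically, not by the instance `Gᶜ` inherits from `G`.
    have hcross := @SimpleGraph.sum_countP_adj_add_sum_countP_compl_adj _ G _
      (fun _ _ => Classical.propDecidable _) _ _ hlr
    have hl' := ihl hl
    have hr' := ihr hr
    simp only [dcCost, leaves, List.length_append]
    set a := l.leaves.length
    set b := r.leaves.length
    have hnode := congrArg ((a + b) * ·) hcross
    have hcube : (a + b) ^ 3 = a ^ 3 + b ^ 3 + 3 * ((a + b) * (a * b)) := by ring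
    linarith

end HCTree

/-- For every graph `G` on `n` vertices and every HC-tree `(T, δ)` of `G`,
`DC-cost(G) + DC-cost(Ḡ) = (n³ − n)/3`. -/
theorem dcCost_add_dcCost_compl {V : Type} [Fintype V] (G : SimpleGraph V)
    (T : HCTree V) (hT : IsHCTree T) :
    dcCost G T + dcCost Gᶜ T = ((Fintype.card V) ^ 3 - Fintype.card V) / 3 := by
  have h := three_mul_dcCost_add_dcCost_compl_add_length G T hT.1
  rw [hT.length_leaves] at h
  omega
end

section
/- For every graph G, an HC-tree (T, δ) of G has minimum DC-cost among all HC-trees of G if and only if (T, δ) has maximum DC-cost among all HC-trees of the complement graph Ḡ. -/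
open HCTree

/-!
Splitting the edges of the complete graph `⊤ = G ⊔ Gᶜ` splits the Dasgupta cost of any tree:
`dcCost G T + dcCost Gᶜ T = dcCost ⊤ T`. On an HC-tree with `n` leaves the cost of `⊤` is
`(n ^ 3 - n) / 3`, independent of the tree, so the cost on `Gᶜ` is a constant minus the cost
on `G`.
-/

namespace HCTree

variable {V : Type}

theorem countP_sup_adj_of_disjoint {G H : SimpleGraph V} [DecidableRel G.Adj]
    [DecidableRel H.Adj] [DecidableRel (G ⊔ H).Adj] (hGH : Disjoint G H) (u : V) (r : List V) :
    r.countP (fun v => decide ((G ⊔ H).Adj u v)) =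
      r.countP (fun v => decide (G.Adj u v)) + r.countP (fun v => decide (H.Adj u v)) := by
  induction r with
  | nil => rfl
  | cons v r ih =>
    have hnot : G.Adj u v → ¬H.Adj u v := SimpleGraph.disjoint_left.1 hGH u v
    by_cases hG : G.Adj u v <;> by_cases hH : H.Adj u v <;> simp_all <;> omega

theorem countP_top_adj_of_notMem [DecidableRel (⊤ : SimpleGraph V).Adj] {u : V} {r : List V}
    (hu : u ∉ r) : r.countP (fun v => decide ((⊤ : SimpleGraph V).Adj u v)) = r.length :=
  List.countP_eq_length.2 fun v hv => by simpa using (ne_of_mem_of_not_mem hv hu).symm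

-- `dcCost` decides adjacency classically, so the lemmas above are instantiated at those instances.
theorem dcCost_sup_of_disjoint {G H : SimpleGraph V} (hGH : Disjoint G H) (T : HCTree V) :
    dcCost (G ⊔ H) T = dcCost G T + dcCost H T := by
  induction T with
  | leaf v => rfl
  | node l r ihl ihr =>
    simp only [dcCost, ihl, ihr, @countP_sup_adj_of_disjoint V G H (Classical.decRel _)
      (Classical.decRel _) (Classical.decRel _) hGH, List.sum_map_add]
    ring

theorem dcCost_add_dcCost_compl (G : SimpleGraph V) (T : HCTree V) :
    dcCost G T + dcCost Gᶜ T = dcCost ⊤ T := by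
  rw [← dcCost_sup_of_disjoint disjoint_compl_right, sup_compl_eq_top]

end HCTree

namespace IsHCTree

variable {V : Type} {T T' : HCTree V}

theorem length_leaves_eq (hT : IsHCTree T) (hT' : IsHCTree T') :
    T.leaves.length = T'.leaves.length :=
  ((List.perm_ext_iff_of_nodup hT.1 hT'.1).2 fun v => iff_of_true (hT.2 v) (hT'.2 v)).length_eq

theorem dcCost_top_eq (hT : IsHCTree T) (hT' : IsHCTree T') : dcCost ⊤ T = dcCost ⊤ T' := by
  have h := three_mul_dcCost_top_add_length hT.1
  have h' := three_mul_dcCost_top_add_length hT'.1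
  rw [hT.length_leaves_eq hT'] at h
  omega

end IsHCTree

theorem minCost_iff_maxCost_compl_general {V : Type} (G : SimpleGraph V)
    (T : HCTree V) (hT : IsHCTree T) :
    (∀ T' : HCTree V, IsHCTree T' → dcCost G T ≤ dcCost G T') ↔
    (∀ T' : HCTree V, IsHCTree T' → dcCost Gᶜ T' ≤ dcCost Gᶜ T) := by
  have hconst : ∀ T' : HCTree V, IsHCTree T' →
      dcCost G T' + dcCost Gᶜ T' = dcCost G T + dcCost Gᶜ T := fun T' hT' => by
    rw [dcCost_add_dcCost_compl, dcCost_add_dcCost_compl, hT'.dcCost_top_eq hT]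
  refine forall₂_congr fun T' hT' => ?_
  have := hconst T' hT'
  omega

/-- An HC-tree of `G` has minimum DC-cost among all HC-trees of `G`
iff it has maximum DC-cost among all HC-trees of the complement `Ḡ`. -/
theorem minCost_iff_maxCost_compl {V : Type} [Fintype V] (G : SimpleGraph V)
    (T : HCTree V) (hT : IsHCTree T) :
    (∀ T' : HCTree V, IsHCTree T' → dcCost G T ≤ dcCost G T') ↔
    (∀ T' : HCTree V, IsHCTree T' → dcCost Gᶜ T' ≤ dcCost Gᶜ T) :=
  minCost_iff_maxCost_compl_general G T hT
end

section
/- Let G be a connected graph and let (T, δ) be an HC-tree of G of minimum DC-cost among all HC-trees of G. Then for every node t of T, the subgraph of G induced by the set of vertices mapped by δ to leaves of the subtree of T rooted at t is connected. -/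
open HCTree

/-- `Subtree s t` holds iff `s` is the subtree of `t` rooted at some node of `t`. -/
inductive Subtree {V : Type} : HCTree V → HCTree V → Prop
  | refl (t : HCTree V) : Subtree t t
  | left {l r t : HCTree V} : Subtree t l → Subtree t (HCTree.node l r)
  | right {l r t : HCTree V} : Subtree t r → Subtree t (HCTree.node l r)

/-!
Minimality among trees on the same leaves passes to subtrees, so by induction from the root it
suffices to show: if `node l r` is minimal and `l ∪ r` induces a connected subgraph, so does `l`.
Otherwise the leaves of `l` split into nonempty parts `a`, `b` with no edge between them, and
connectivity of `l ∪ r` gives an edge from `b` to `r`. Restricting `l` to `a` and to `b` does not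
increase the cost, and replacing `node l r` by `node a (node b r)` strictly decreases it.
-/

namespace SimpleGraph

variable {V : Type} {G : SimpleGraph V} {s : Set V}

lemma exists_adj_across_of_preconnected_induce (h : (G.induce s).Preconnected) {a b : V}
    (ha : a ∈ s) (hb : b ∈ s) {C : Set V} (haC : a ∈ C) (hbC : b ∉ C) :
    ∃ u ∈ s, ∃ v ∈ s, u ∈ C ∧ v ∉ C ∧ G.Adj u v := by
  obtain ⟨w⟩ := h ⟨a, ha⟩ ⟨b, hb⟩
  obtain ⟨d, -, hd₁, hd₂⟩ := w.exists_boundary_dart (Subtype.val ⁻¹' C) haC hbC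
  exact ⟨_, d.fst.2, _, d.snd.2, hd₁, hd₂, d.adj⟩

lemma exists_cut_of_not_connected_induce (hs : s.Nonempty) (h : ¬(G.induce s).Connected) :
    ∃ C : Set V, (∃ x ∈ s, x ∈ C) ∧ (∃ y ∈ s, y ∉ C) ∧
      ∀ u ∈ s, ∀ v ∈ s, u ∈ C → v ∉ C → ¬G.Adj u v := by
  have : ¬(G.induce s).Preconnected := fun hp => h ((connected_iff _).mpr ⟨hp, hs.to_subtype⟩)
  simp only [Preconnected, not_forall] at this
  obtain ⟨x, y, hxy⟩ := this
  refine ⟨{v | ∃ hv : v ∈ s, (G.induce s).Reachable x ⟨v, hv⟩}, ⟨x, x.2, x.2, .rfl⟩,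
    ⟨y, y.2, fun ⟨_, hr⟩ => hxy hr⟩, ?_⟩
  rintro u hu v hv huC hvC huv
  obtain ⟨hu', hxu⟩ := huC
  have huv' : (G.induce s).Adj ⟨u, hu'⟩ ⟨v, hv⟩ := huv
  exact hvC ⟨hv, hxu.trans huv'.reachable⟩

end SimpleGraph

namespace HCTree

variable {V : Type} (G : SimpleGraph V)

open Classical in
noncomputable def crossCount (L R : List V) : ℕ :=
  (L.map (fun u => R.countP (fun v => decide (G.Adj u v)))).sum

lemma dcCost_node (l r : HCTree V) :
    dcCost G (node l r) = dcCost G l + dcCost G r +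
      (l.leaves.length + r.leaves.length) * crossCount G l.leaves r.leaves := rfl

lemma crossCount_nil_left (R : List V) : crossCount G [] R = 0 := rfl

lemma crossCount_append_left (L₁ L₂ R : List V) :
    crossCount G (L₁ ++ L₂) R = crossCount G L₁ R + crossCount G L₂ R := by
  simp [crossCount]

lemma crossCount_append_right (L R₁ R₂ : List V) :
    crossCount G L (R₁ ++ R₂) = crossCount G L R₁ + crossCount G L R₂ := by
  simp [crossCount, List.countP_append, List.sum_map_add]

lemma crossCount_nil_right (L : List V) : crossCount G L [] = 0 := by
  simp [crossCount]

open Classical in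
lemma crossCount_singleton_left (u : V) (R : List V) :
    crossCount G [u] R = R.countP (fun v => decide (G.Adj u v)) := by
  simp [crossCount]

open Classical in
lemma crossCount_singleton_right (L : List V) (v : V) :
    crossCount G L [v] = L.countP (fun u => decide (G.Adj u v)) := by
  induction L with
  | nil => rfl
  | cons u L ih =>
    rw [← List.singleton_append, crossCount_append_left, ih, crossCount_singleton_left,
      List.countP_append]
    simp [List.countP_cons]

lemma crossCount_comm (L R : List V) : crossCount G L R = crossCount G R L := by
  induction L with
  | nil => rw [crossCount_nil_left, crossCount_nil_right]
  | cons u L ih =>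
    rw [← List.singleton_append, crossCount_append_left, crossCount_append_right, ih,
      crossCount_singleton_left, crossCount_singleton_right]
    congr 1
    exact List.countP_congr fun w _ => by simp [G.adj_comm]

lemma crossCount_perm_left {L₁ L₂ : List V} (h : L₁.Perm L₂) (R : List V) :
    crossCount G L₁ R = crossCount G L₂ R :=
  (h.map _).sum_eq

lemma crossCount_perm_right (L : List V) {R₁ R₂ : List V} (h : R₁.Perm R₂) :
    crossCount G L R₁ = crossCount G L R₂ := by
  rw [crossCount_comm, crossCount_perm_left G h, crossCount_comm]

lemma crossCount_eq_zero {L R : List V} (h : ∀ u ∈ L, ∀ v ∈ R, ¬G.Adj u v) :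
    crossCount G L R = 0 := by
  refine List.sum_eq_zero fun n hn => ?_
  obtain ⟨u, hu, rfl⟩ := List.mem_map.mp hn
  exact List.countP_eq_zero.mpr fun v hv => by simpa using h u hu v hv

lemma crossCount_pos {L R : List V} {u v : V} (hu : u ∈ L) (hv : v ∈ R) (huv : G.Adj u v) :
    0 < crossCount G L R := by
  classical
  exact lt_of_lt_of_le (List.countP_pos_iff.mpr ⟨v, hv, by simpa using huv⟩)
    (List.le_sum_of_mem (List.mem_map_of_mem hu))

lemma crossCount_filter_add_le (p : V → Bool) (L R : List V) :
    crossCount G (L.filter p) (R.filter p) +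
      crossCount G (L.filter (fun v => !p v)) (R.filter (fun v => !p v)) ≤ crossCount G L R := by
  rw [← crossCount_perm_left G (List.filter_append_perm p L),
    ← crossCount_perm_right G _ (List.filter_append_perm p R)]
  simp only [crossCount_append_left, crossCount_append_right]
  omega

variable {G}

lemma leaves_ne_nil : ∀ t : HCTree V, t.leaves ≠ []
  | leaf _ => List.cons_ne_nil _ _
  | node l _ => by simp [leaves, leaves_ne_nil l]

def nodeOpt : Option (HCTree V) → Option (HCTree V) → Option (HCTree V)
  | some a, some b => some (node a b)
  | a, none => a
  | none, b => b

def restrict (p : V → Bool) : HCTree V → Option (HCTree V)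
  | leaf v => if p v then some (leaf v) else none
  | node l r => nodeOpt (restrict p l) (restrict p r)

def leavesOpt : Option (HCTree V) → List V
  | none => []
  | some t => t.leaves

variable (G) in
noncomputable def dcCostOpt : Option (HCTree V) → ℕ
  | none => 0
  | some t => dcCost G t

lemma leavesOpt_nodeOpt (a b : Option (HCTree V)) :
    leavesOpt (nodeOpt a b) = leavesOpt a ++ leavesOpt b := by
  cases a <;> cases b <;> simp [nodeOpt, leavesOpt, leaves]

lemma dcCostOpt_nodeOpt (a b : Option (HCTree V)) :
    dcCostOpt G (nodeOpt a b) = dcCostOpt G a + dcCostOpt G b +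
      ((leavesOpt a).length + (leavesOpt b).length) *
        crossCount G (leavesOpt a) (leavesOpt b) := by
  cases a <;> cases b <;>
    simp [nodeOpt, dcCostOpt, leavesOpt, dcCost_node, crossCount_nil_left, crossCount_nil_right]

lemma leavesOpt_restrict (p : V → Bool) (t : HCTree V) :
    leavesOpt (restrict p t) = t.leaves.filter p := by
  induction t with
  | leaf v => by_cases h : p v <;> simp [restrict, leavesOpt, leaves, h]
  | node l r ihl ihr => rw [restrict, leavesOpt_nodeOpt, ihl, ihr, leaves, List.filter_append]

lemma exists_restrict_eq_some {p : V → Bool} {t : HCTree V} (h : ∃ x ∈ t.leaves, p x) :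
    ∃ a, restrict p t = some a ∧ a.leaves = t.leaves.filter p := by
  obtain ⟨x, hx, hpx⟩ := h
  cases ht : restrict p t with
  | none =>
    have := leavesOpt_restrict p t
    rw [ht, leavesOpt, eq_comm, List.filter_eq_nil_iff] at this
    exact absurd hpx (this x hx)
  | some a => exact ⟨a, rfl, by simpa [ht, leavesOpt] using leavesOpt_restrict p t⟩

lemma dcCostOpt_restrict_add_le (p : V → Bool) (t : HCTree V) :
    dcCostOpt G (restrict p t) + dcCostOpt G (restrict (fun v => !p v) t) ≤ dcCost G t := by
  induction t with
  | leaf v => by_cases h : p v <;> simp [restrict, dcCostOpt, dcCost, h]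
  | node l r ihl ihr =>
    simp only [restrict, dcCostOpt_nodeOpt, leavesOpt_restrict, dcCost_node]
    have hcross := crossCount_filter_add_le G p l.leaves r.leaves
    have hlen : ∀ q : V → Bool, (l.leaves.filter q).length + (r.leaves.filter q).length ≤
        l.leaves.length + r.leaves.length := fun q =>
      Nat.add_le_add (List.length_filter_le _ _) (List.length_filter_le _ _)
    nlinarith [hlen p, hlen (fun v => !p v)]

lemma exists_split (p : V → Bool) {t : HCTree V} (hp : ∃ x ∈ t.leaves, p x)
    (hq : ∃ y ∈ t.leaves, p y = false) :
    ∃ a b : HCTree V, a.leaves = t.leaves.filter p ∧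
      b.leaves = t.leaves.filter (fun v => !p v) ∧ dcCost G a + dcCost G b ≤ dcCost G t := by
  obtain ⟨a, ha, hal⟩ := exists_restrict_eq_some hp
  obtain ⟨b, hb, hbl⟩ := exists_restrict_eq_some (p := fun v => !p v) (by simpa using hq)
  have hcost := dcCostOpt_restrict_add_le (G := G) p t
  rw [ha, hb] at hcost
  exact ⟨a, b, hal, hbl, hcost⟩

lemma dcCost_node_comm (l r : HCTree V) : dcCost G (node r l) = dcCost G (node l r) := by
  rw [dcCost_node, dcCost_node, crossCount_comm]
  ring

/-- Regrafting the part `b` of `l`, which has no edge to the rest `a`, next to `r` saves at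
least `|a|` per edge between `b` and `r`. -/
lemma dcCost_regraft_lt {a b l r : HCTree V} (hperm : (a.leaves ++ b.leaves).Perm l.leaves)
    (hcost : dcCost G a + dcCost G b ≤ dcCost G l) (hab : crossCount G a.leaves b.leaves = 0)
    (hbr : 0 < crossCount G b.leaves r.leaves) :
    dcCost G (node a (node b r)) < dcCost G (node l r) := by
  have hlen : a.leaves.length + b.leaves.length = l.leaves.length := by
    simpa using hperm.length_eq
  have hcross : crossCount G l.leaves r.leaves =
      crossCount G a.leaves r.leaves + crossCount G b.leaves r.leaves := by
    rw [← crossCount_perm_left G hperm, crossCount_append_left]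
  have ha : 0 < a.leaves.length := List.length_pos_iff.mpr (leaves_ne_nil a)
  simp only [dcCost_node, leaves, List.length_append, crossCount_append_right, hab, hcross,
    ← hlen]
  nlinarith [Nat.mul_pos ha hbr]

variable (G) in
def IsOptimal (t : HCTree V) : Prop :=
  ∀ t' : HCTree V, t'.leaves.Perm t.leaves → dcCost G t ≤ dcCost G t'

namespace IsOptimal

variable {l r : HCTree V}

lemma left (h : IsOptimal G (node l r)) : IsOptimal G l := fun l' hl' => by
  have := h (node l' r) (hl'.append_right _)
  rw [dcCost_node, dcCost_node, hl'.length_eq, crossCount_perm_left G hl'] at this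
  omega

lemma right (h : IsOptimal G (node l r)) : IsOptimal G r := fun r' hr' => by
  have := h (node l r') (hr'.append_left _)
  rw [dcCost_node, dcCost_node, hr'.length_eq, crossCount_perm_right G _ hr'] at this
  omega

lemma swap (h : IsOptimal G (node l r)) : IsOptimal G (node r l) := fun t' ht' => by
  rw [dcCost_node_comm]
  exact h t' (ht'.trans List.perm_append_comm)

lemma connected_left (h : IsOptimal G (node l r))
    (hc : (G.induce {v | v ∈ (node l r).leaves}).Connected) :
    (G.induce {v | v ∈ l.leaves}).Connected := by
  classical
  by_contra hl
  obtain ⟨C, ⟨x, hxl, hxC⟩, ⟨y, hyl, hyC⟩, hcut⟩ :=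
    SimpleGraph.exists_cut_of_not_connected_induce
      (List.exists_mem_of_ne_nil _ (leaves_ne_nil l)) hl
  set p : V → Bool := fun v => decide (v ∈ C)
  obtain ⟨a, b, ha, hb, hcost⟩ := exists_split (G := G) p ⟨x, hxl, by simpa [p] using hxC⟩
    ⟨y, hyl, by simpa [p] using hyC⟩
  have hmemA : ∀ u ∈ a.leaves, u ∈ l.leaves ∧ u ∈ C := by
    intro u hu; rw [ha] at hu; simpa [p] using List.mem_filter.mp hu
  have hmemB : ∀ u ∈ b.leaves, u ∈ l.leaves ∧ u ∉ C := by
    intro u hu; rw [hb] at hu; simpa [p] using List.mem_filter.mp hu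
  have hab : crossCount G a.leaves b.leaves = 0 := crossCount_eq_zero G fun u hu v hv =>
    hcut u (hmemA u hu).1 v (hmemB v hv).1 (hmemA u hu).2 (hmemB v hv).2
  -- a path in `l ∪ r` from `y` to `x` leaves the part `b` of `l` through an edge into `r`
  obtain ⟨u, -, v, hv, ⟨hul, huC⟩, hvb, huv⟩ :=
    SimpleGraph.exists_adj_across_of_preconnected_induce hc.preconnected
      (List.mem_append_left _ hyl) (List.mem_append_left _ hxl)
      (C := {w | w ∈ l.leaves ∧ w ∉ C}) ⟨hyl, hyC⟩ fun hx => hx.2 hxC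
  have hvr : v ∈ r.leaves := by
    refine (List.mem_append.mp hv).resolve_left fun hvl => ?_
    exact hcut v hvl u hul (by_contra fun hvC => hvb ⟨hvl, hvC⟩) huC huv.symm
  have hbr : 0 < crossCount G b.leaves r.leaves :=
    crossCount_pos G (by rw [hb]; simpa [p] using ⟨hul, huC⟩) hvr huv
  have hperm : (a.leaves ++ b.leaves).Perm l.leaves := by
    rw [ha, hb]; exact List.filter_append_perm p l.leaves
  have hopt := h (node a (node b r))
    (by simpa only [leaves, ← List.append_assoc] using hperm.append_right r.leaves)
  exact absurd hopt (not_le.mpr (dcCost_regraft_lt hperm hcost hab hbr))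

lemma connected_right (h : IsOptimal G (node l r))
    (hc : (G.induce {v | v ∈ (node l r).leaves}).Connected) :
    (G.induce {v | v ∈ r.leaves}).Connected := by
  refine h.swap.connected_left ?_
  have hset : {v | v ∈ (node r l).leaves} = {v | v ∈ (node l r).leaves} := by
    ext v; simp [leaves, or_comm]
  rwa [hset]

lemma connected_of_subtree {s t : HCTree V} (h : IsOptimal G t)
    (hc : (G.induce {v | v ∈ t.leaves}).Connected) (hs : Subtree s t) :
    (G.induce {v | v ∈ s.leaves}).Connected := by
  induction hs with
  | refl => exact hc
  | left _ ih => exact ih h.left (h.connected_left hc)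
  | right _ ih => exact ih h.right (h.connected_right hc)

end IsOptimal

end HCTree

theorem minCost_subtree_connected_general {V : Type} (G : SimpleGraph V)
    (hG : G.Connected) (T : HCTree V) (hT : IsHCTree T)
    (hmin : ∀ T' : HCTree V, IsHCTree T' → dcCost G T ≤ dcCost G T')
    (s : HCTree V) (hs : Subtree s T) :
    (G.induce {v : V | v ∈ s.leaves}).Connected := by
  have hopt : IsOptimal G T := fun T' hperm =>
    hmin T' ⟨hperm.nodup_iff.mpr hT.1, fun v => hperm.mem_iff.mpr (hT.2 v)⟩
  have hconn : (G.induce {v : V | v ∈ T.leaves}).Connected := by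
    have huniv : {v : V | v ∈ T.leaves} = Set.univ := Set.eq_univ_of_forall hT.2
    rw [huniv]
    exact G.induceUnivIso.connected_iff.mpr hG
  exact hopt.connected_of_subtree hconn hs

/-- Let `G` be connected and `(T, δ)` an HC-tree of `G` of minimum
DC-cost.  Then for every node `t` of `T`, the subgraph of `G` induced by the vertices
mapped to leaves of the subtree rooted at `t` is connected. -/
theorem minCost_subtree_connected {V : Type} [Fintype V] (G : SimpleGraph V)
    (hG : G.Connected) (T : HCTree V) (hT : IsHCTree T)
    (hmin : ∀ T' : HCTree V, IsHCTree T' → dcCost G T ≤ dcCost G T')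
    (s : HCTree V) (hs : Subtree s T) :
    (G.induce {v : V | v ∈ s.leaves}).Connected :=
  minCost_subtree_connected_general G hG T hT hmin s hs
end

section
/- Let φ be a NAESAT* instance with n variables and m = n/3 three-clauses, and let G'' be the subgraph of the Dasgupta graph of φ consisting of all 2n literal vertices together with the matching edges and the 3-clause edges (omitting the 2-clause edges). Then G'' is a disjoint union of m copies of the prism, one for each 3-clause. In particular, every vertex of the full Dasgupta graph G of φ has degree at most 5. -/
open HCTree

/-- A literal over `n` variables: a variable together with a polarity
(`true` = positive occurrence). -/
abbrev Lit (n : ℕ) := Fin n × Bool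

/-- The negation of a literal. -/
def Lit.neg {n : ℕ} (l : Lit n) : Lit n := (l.1, !l.2)

/-- A NAESAT* instance over `n` variables: a CNF formula whose clauses have two or three
literals each (over pairwise distinct variables), where every variable appears in exactly
one 3-clause, every literal appears in at most one 2-clause (so each variable has at most
one positive and at most one negative appearance in 2-clauses), no 2-clause nor its copy
with polarities reversed is contained in a 3-clause, and no two 2-clauses are
polarity-reversed copies of each other. -/
structure NAESATStar (n : ℕ) where
  threeClauses : Finset (Finset (Lit n))
  twoClauses : Finset (Finset (Lit n))
  three_card : ∀ c ∈ threeClauses, c.card = 3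
  two_card : ∀ c ∈ twoClauses, c.card = 2
  three_distinct_vars : ∀ c ∈ threeClauses, ∀ l ∈ c, ∀ l' ∈ c, l.1 = l'.1 → l = l'
  two_distinct_vars : ∀ c ∈ twoClauses, ∀ l ∈ c, ∀ l' ∈ c, l.1 = l'.1 → l = l'
  var_in_unique_threeClause :
    ∀ x : Fin n, ∃! c, c ∈ threeClauses ∧ ∃ b : Bool, (x, b) ∈ c
  lit_in_atMostOne_twoClause :
    ∀ l : Lit n, ∀ c ∈ twoClauses, ∀ c' ∈ twoClauses, l ∈ c → l ∈ c' → c = c'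
  two_not_inside_three :
    ∀ c ∈ twoClauses, ∀ c' ∈ threeClauses, ¬ c ⊆ c' ∧ ¬ c.image Lit.neg ⊆ c'
  no_reversed_twoClauses :
    ∀ c ∈ twoClauses, ∀ c' ∈ twoClauses, c' ≠ c.image Lit.neg

/-- The Dasgupta graph of a NAESAT* instance `φ`: one vertex per literal; a matching edge
`x x̄` for every variable `x`; for every 2-clause `(l1 ∨ l2)` the two edges `l1 l2` and
`l̄1 l̄2`; and for every 3-clause `(l1 ∨ l2 ∨ l3)` the triangles `l1 l2 l3` and
`l̄1 l̄2 l̄3`. -/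
def dasguptaGraph {n : ℕ} (φ : NAESATStar n) : SimpleGraph (Lit n) :=
  SimpleGraph.fromRel (fun a b =>
    a.1 = b.1 ∨
    (∃ c ∈ φ.twoClauses, (a ∈ c ∧ b ∈ c) ∨ (Lit.neg a ∈ c ∧ Lit.neg b ∈ c)) ∨
    (∃ c ∈ φ.threeClauses, (a ∈ c ∧ b ∈ c) ∨ (Lit.neg a ∈ c ∧ Lit.neg b ∈ c)))

/-- The prism graph `P` (the complement of the 6-cycle): two vertex-disjoint triangles
`{0,1,2}` and `{3,4,5}` together with the three matching edges `0-3`, `1-4`, `2-5`. -/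
def Prism : SimpleGraph (Fin 6) :=
  SimpleGraph.fromRel (fun a b =>
    (a.val < 3 ∧ b.val < 3) ∨ (3 ≤ a.val ∧ 3 ≤ b.val) ∨ b.val = a.val + 3)

/-- The subgraph `G''` of the Dasgupta graph of `φ` consisting of all literal vertices
together with the matching edges and the 3-clause edges (omitting the 2-clause edges). -/
def matchingThreeGraph {n : ℕ} (φ : NAESATStar n) : SimpleGraph (Lit n) :=
  SimpleGraph.fromRel (fun a b =>
    a.1 = b.1 ∨
    (∃ c ∈ φ.threeClauses, (a ∈ c ∧ b ∈ c) ∨ (Lit.neg a ∈ c ∧ Lit.neg b ∈ c)))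

open SimpleGraph

namespace Lit

variable {n : ℕ}

@[simp] lemma neg_fst (l : Lit n) : l.neg.1 = l.1 := rfl

@[simp] lemma neg_snd (l : Lit n) : l.neg.2 = !l.2 := rfl

lemma neg_involutive : Function.Involutive (Lit.neg (n := n)) := fun l => by
  simp [Lit.neg]

end Lit

@[simp] lemma copies_adj {V : Type} (G : SimpleGraph V) (k : ℕ) (a b : V × Fin k) :
    (copies G k).Adj a b ↔ a.2 = b.2 ∧ G.Adj a.1 b.1 := Iff.rfl

lemma ncard_neighborSet_copies {V : Type} (G : SimpleGraph V) (k : ℕ) (v : V × Fin k) :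
    ((copies G k).neighborSet v).ncard = (G.neighborSet v.1).ncard := by
  have h : (copies G k).neighborSet v = (·, v.2) '' G.neighborSet v.1 := by
    ext ⟨w, i⟩
    simp [eq_comm, and_comm]
  rw [h, Set.ncard_image_of_injective _ fun _ _ h => congrArg Prod.fst h]

def copiesCongr {V W : Type} {G : SimpleGraph V} {H : SimpleGraph W} (e : G ≃g H) (k : ℕ) :
    copies G k ≃g copies H k where
  toEquiv := e.toEquiv.prodCongr (Equiv.refl _)
  map_rel_iff' := by simp [e.map_adj_iff]

namespace SimpleGraph

variable {V W : Type*} {G : SimpleGraph V} {H : SimpleGraph W}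

lemma Iso.ncard_neighborSet (e : G ≃g H) (v : V) :
    (G.neighborSet v).ncard = (H.neighborSet (e v)).ncard := by
  rw [← e.toEmbedding.preimage_neighborSet v]
  exact Set.ncard_preimage_of_injective_subset_range e.injective (by simp [e.surjective.range_eq])

lemma ncard_neighborSet_top_boxProd_top [Fintype V] [Fintype W] (p : V × W) :
    (((⊤ : SimpleGraph V).boxProd (⊤ : SimpleGraph W)).neighborSet p).ncard =
      (Fintype.card V - 1) + (Fintype.card W - 1) := by
  classical
  rw [Set.ncard_eq_toFinset_card', ← neighborFinset_def, card_neighborFinset_eq_degree,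
    degree_boxProd, complete_graph_degree, complete_graph_degree]

end SimpleGraph

def topBoxProdTopIsoPrism :
    (⊤ : SimpleGraph (Fin 3)).boxProd (⊤ : SimpleGraph Bool) ≃g Prism where
  toEquiv := (Equiv.prodComm _ _).trans ((Equiv.boolProdEquivSum _).trans finSumFinEquiv)
  map_rel_iff' := by
    simp only [Prism, fromRel_adj, boxProd_adj, top_adj]
    decide

namespace NAESATStar

variable {n : ℕ} (φ : NAESATStar n)

noncomputable def clause (x : Fin n) : φ.threeClauses :=
  ⟨_, (φ.var_in_unique_threeClause x).exists.choose_spec.1⟩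

lemma exists_mem_clause (x : Fin n) : ∃ b, (x, b) ∈ (φ.clause x : Finset (Lit n)) :=
  (φ.var_in_unique_threeClause x).exists.choose_spec.2

lemma clause_eq_of_mem {c : Finset (Lit n)} (hc : c ∈ φ.threeClauses) {a : Lit n}
    (ha : a ∈ c) : (φ.clause a.1 : Finset (Lit n)) = c :=
  (φ.var_in_unique_threeClause a.1).unique ⟨(φ.clause a.1).2, φ.exists_mem_clause a.1⟩
    ⟨hc, a.2, ha⟩

noncomputable def side (a : Lit n) : Bool := decide (a ∈ (φ.clause a.1 : Finset (Lit n)))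

lemma mem_clause_iff_snd_eq {x : Fin n} {b : Bool} (hb : (x, b) ∈ (φ.clause x : Finset (Lit n)))
    (s : Bool) : (x, s) ∈ (φ.clause x : Finset (Lit n)) ↔ s = b :=
  ⟨fun h => congrArg Prod.snd (φ.three_distinct_vars _ (φ.clause x).2 _ h _ hb rfl),
    by rintro rfl; exact hb⟩

lemma side_neg (a : Lit n) : φ.side a.neg = !φ.side a := by
  obtain ⟨x, s⟩ := a
  obtain ⟨b, hb⟩ := φ.exists_mem_clause x
  simp only [side, Lit.neg, φ.mem_clause_iff_snd_eq hb]
  cases s <;> cases b <;> rfl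

lemma mem_threeClause_iff {c : Finset (Lit n)} (hc : c ∈ φ.threeClauses) (a : Lit n) :
    a ∈ c ↔ (φ.clause a.1 : Finset (Lit n)) = c ∧ φ.side a = true := by
  constructor
  · intro ha
    have h := φ.clause_eq_of_mem hc ha
    exact ⟨h, by simp [side, h, ha]⟩
  · rintro ⟨rfl, h⟩
    simpa [side] using h

lemma eq_of_fst_eq_of_side_eq {a b : Lit n} (h₁ : a.1 = b.1) (h₂ : φ.side a = φ.side b) :
    a = b := by
  by_contra hne
  have hb : b = a.neg := Prod.ext h₁.symm (by
    cases ha : a.2 <;> cases hb : b.2 <;> simp_all [Prod.ext_iff])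
  simp [hb, side_neg] at h₂

lemma exists_threeClause_iff (a b : Lit n) :
    (∃ c ∈ φ.threeClauses, (a ∈ c ∧ b ∈ c) ∨ (a.neg ∈ c ∧ b.neg ∈ c)) ↔
      φ.clause a.1 = φ.clause b.1 ∧ φ.side a = φ.side b := by
  constructor
  · rintro ⟨c, hc, h⟩
    simp only [φ.mem_threeClause_iff hc, Lit.neg_fst, side_neg, Bool.not_eq_true'] at h
    exact ⟨Subtype.ext (by grind), by grind⟩
  · rintro ⟨hc, hs⟩
    have hcb : (φ.clause b.1 : Finset (Lit n)) = φ.clause a.1 := congrArg Subtype.val hc.symm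
    refine ⟨_, (φ.clause a.1).2, ?_⟩
    simp only [φ.mem_threeClause_iff (φ.clause a.1).2, Lit.neg_fst, side_neg, hcb, ← hs,
      true_and]
    cases φ.side a <;> simp

lemma matchingThreeGraph_adj {a b : Lit n} : (matchingThreeGraph φ).Adj a b ↔
    a ≠ b ∧ (a.1 = b.1 ∨ φ.clause a.1 = φ.clause b.1 ∧ φ.side a = φ.side b) := by
  simp only [matchingThreeGraph, fromRel_adj, exists_threeClause_iff]
  grind

lemma card_fiber_clause (c : φ.threeClauses) : Fintype.card {x // φ.clause x = c} = 3 := by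
  rw [Fintype.card_subtype, ← φ.three_card c c.2]
  have : Finset.univ.filter (fun x => φ.clause x = c) = (c : Finset (Lit n)).image Prod.fst := by
    ext x
    simp only [Finset.mem_filter, Finset.mem_univ, true_and, Finset.mem_image]
    constructor
    · rintro rfl
      obtain ⟨b, hb⟩ := φ.exists_mem_clause x
      exact ⟨_, hb, rfl⟩
    · rintro ⟨a, ha, rfl⟩
      exact Subtype.ext (φ.clause_eq_of_mem c.2 ha)
  rw [this, Finset.card_image_of_injOn]
  exact fun a ha b hb h => φ.three_distinct_vars _ c.2 a ha b hb h

variable {m : ℕ} (hm : m = φ.threeClauses.card)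

noncomputable def slotEquiv : Fin n ≃ Fin m × Fin 3 :=
  (Equiv.sigmaFiberEquiv φ.clause).symm.trans <|
    (Equiv.sigmaCongrRight fun c => Fintype.equivFinOfCardEq (φ.card_fiber_clause c)).trans <|
      (Equiv.sigmaEquivProd _ _).trans <|
        Equiv.prodCongr (φ.threeClauses.equivFin.trans (finCongr hm.symm)) (Equiv.refl _)

lemma slotEquiv_fst_eq_iff (x y : Fin n) :
    (φ.slotEquiv hm x).1 = (φ.slotEquiv hm y).1 ↔ φ.clause x = φ.clause y :=
  (φ.threeClauses.equivFin.trans (finCongr hm.symm)).apply_eq_iff_eq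

noncomputable def prismCoord (a : Lit n) : (Fin 3 × Bool) × Fin m :=
  (((φ.slotEquiv hm a.1).2, φ.side a), (φ.slotEquiv hm a.1).1)

lemma fst_eq_iff_clause_eq_and_slot_eq (a b : Lit n) : a.1 = b.1 ↔
    φ.clause a.1 = φ.clause b.1 ∧ (φ.slotEquiv hm a.1).2 = (φ.slotEquiv hm b.1).2 := by
  rw [← (φ.slotEquiv hm).apply_eq_iff_eq, Prod.ext_iff, slotEquiv_fst_eq_iff]

lemma prismCoord_injective : Function.Injective (φ.prismCoord hm) := by
  intro a b h
  simp only [prismCoord, Prod.ext_iff] at h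
  exact φ.eq_of_fst_eq_of_side_eq ((φ.slotEquiv hm).injective (Prod.ext h.2 h.1.1)) h.1.2

lemma prismCoord_bijective : Function.Bijective (φ.prismCoord hm) := by
  refine (Fintype.bijective_iff_injective_and_card _).2 ⟨φ.prismCoord_injective hm, ?_⟩
  have := Fintype.card_congr (φ.slotEquiv hm)
  simp only [Fintype.card_prod, Fintype.card_fin, Fintype.card_bool] at this ⊢
  omega

noncomputable def matchingThreeGraphIsoCopies : matchingThreeGraph φ ≃g
    copies ((⊤ : SimpleGraph (Fin 3)).boxProd (⊤ : SimpleGraph Bool)) m where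
  toEquiv := Equiv.ofBijective _ (φ.prismCoord_bijective hm)
  map_rel_iff' {a b} := by
    have hlit : a = b ↔ a.1 = b.1 ∧ φ.side a = φ.side b :=
      ⟨by rintro rfl; simp, fun h => φ.eq_of_fst_eq_of_side_eq h.1 h.2⟩
    simp only [Equiv.ofBijective_apply, prismCoord, copies_adj, boxProd_adj, top_adj,
      matchingThreeGraph_adj, ne_eq, hlit, φ.fst_eq_iff_clause_eq_and_slot_eq hm,
      slotEquiv_fst_eq_iff]
    tauto

def twoClausePartners (l : Lit n) : Set (Lit n) :=
  {u | u ≠ l ∧ ∃ d ∈ φ.twoClauses, l ∈ d ∧ u ∈ d}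

lemma ncard_twoClausePartners_le_one (l : Lit n) : (φ.twoClausePartners l).ncard ≤ 1 := by
  rw [Set.ncard_le_one (Set.toFinite _)]
  rintro a ⟨ha, d, hd, hld, had⟩ b ⟨hb, d', hd', hld', hbd'⟩
  obtain rfl := φ.lit_in_atMostOne_twoClause l d hd d' hd' hld hld'
  have hcard : (d.erase l).card = 1 := by rw [Finset.card_erase_of_mem hld, φ.two_card d hd]
  obtain ⟨w, hw⟩ := Finset.card_eq_one.1 hcard
  have ha' : a ∈ d.erase l := Finset.mem_erase.2 ⟨ha, had⟩
  have hb' : b ∈ d.erase l := Finset.mem_erase.2 ⟨hb, hbd'⟩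
  rw [hw, Finset.mem_singleton] at ha' hb'
  rw [ha', hb']

lemma neighborSet_dasguptaGraph_subset (v : Lit n) :
    (dasguptaGraph φ).neighborSet v ⊆ (matchingThreeGraph φ).neighborSet v ∪
      (φ.twoClausePartners v ∪ Lit.neg ⁻¹' φ.twoClausePartners v.neg) := by
  intro u hu
  simp only [mem_neighborSet, dasguptaGraph, matchingThreeGraph, fromRel_adj, twoClausePartners,
    Set.mem_union, Set.mem_preimage] at hu ⊢
  have hneg_inj : u.neg = v.neg → u = v := fun h => Lit.neg_involutive.injective h
  grind

lemma ncard_neighborSet_matchingThreeGraph (v : Lit n) :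
    ((matchingThreeGraph φ).neighborSet v).ncard = 3 := by
  rw [(φ.matchingThreeGraphIsoCopies rfl).ncard_neighborSet, ncard_neighborSet_copies,
    ncard_neighborSet_top_boxProd_top]
  simp

lemma ncard_neighborSet_dasguptaGraph_le (v : Lit n) :
    ((dasguptaGraph φ).neighborSet v).ncard ≤ 5 := by
  have hneg :
      (Lit.neg ⁻¹' φ.twoClausePartners v.neg).ncard = (φ.twoClausePartners v.neg).ncard :=
    Set.ncard_preimage_of_injective_subset_range Lit.neg_involutive.injective
      (by simp [Lit.neg_involutive.surjective.range_eq])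
  calc ((dasguptaGraph φ).neighborSet v).ncard
      ≤ ((matchingThreeGraph φ).neighborSet v ∪
          (φ.twoClausePartners v ∪ Lit.neg ⁻¹' φ.twoClausePartners v.neg)).ncard :=
        Set.ncard_le_ncard (φ.neighborSet_dasguptaGraph_subset v) (Set.toFinite _)
    _ ≤ ((matchingThreeGraph φ).neighborSet v).ncard +
          ((φ.twoClausePartners v).ncard + (Lit.neg ⁻¹' φ.twoClausePartners v.neg).ncard) :=
        (Set.ncard_union_le _ _).trans (Nat.add_le_add_left (Set.ncard_union_le _ _) _)
    _ ≤ 3 + (1 + 1) := by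
        rw [ncard_neighborSet_matchingThreeGraph, hneg]
        gcongr <;> exact φ.ncard_twoClausePartners_le_one _

end NAESATStar

theorem matchingThreeGraph_iso_prisms_general (n : ℕ) (φ : NAESATStar n) (m : ℕ)
    (hm : m = φ.threeClauses.card) :
    Nonempty (matchingThreeGraph φ ≃g copies Prism m) ∧
    ∀ v : Lit n, ((dasguptaGraph φ).neighborSet v).ncard ≤ 5 :=
  ⟨⟨(φ.matchingThreeGraphIsoCopies hm).trans (copiesCongr topBoxProdTopIsoPrism m)⟩,
    φ.ncard_neighborSet_dasguptaGraph_le⟩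

/-- For a NAESAT* instance `φ` with `n` variables and `m = n/3`
3-clauses, the graph `G''` (matching edges plus 3-clause edges) is a disjoint union of
`m` prisms, one per 3-clause; in particular every vertex of the full Dasgupta graph of
`φ` has degree at most 5. -/
theorem matchingThreeGraph_iso_prisms (n : ℕ) (φ : NAESATStar n) (m : ℕ)
    (hm : m = φ.threeClauses.card) (hnm : n = 3 * m) :
    Nonempty (matchingThreeGraph φ ≃g copies Prism m) ∧
    ∀ v : Lit n, ((dasguptaGraph φ).neighborSet v).ncard ≤ 5 :=
  matchingThreeGraph_iso_prisms_general n φ m hm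
end
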